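/- The monic polynomials p_{2j}(x) = x^{2j} and p_{2j+1}(x) = x^{2j+1} - 2j·x^{2j-1} are skew-orthogonal with respect to the inner product ⟨f,g⟩ = (1/2)∫_{-∞}^{∞}∫_{-∞}^{∞} e^{-(x²+y²)/2} f(x) g(y) sgn(y-x) dx dy restricted to the real-real part; specifically ⟨p_{2j}, p_{2k}⟩ = 0 and ⟨p_{2j+1}, p_{2k+1}⟩ = 0 for all j,k, where sgn is the sign function. -/

import Mathlib

/-!
The Gaussian weight is even and `sgn (y - x)` is odd under `(x, y) ↦ (-x, -y)`, while
`f x * g y` is even when `f` and `g` have the same parity. Hence the inner integral is an odd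
function of `x`, and the outer integral vanishes by reflection invariance of Lebesgue measure.
No integrability is needed: reflection invariance also holds for the Bochner integral's junk
value `0`.
-/

open MeasureTheory Real

/-- The skew-symmetric inner product
`⟨f,g⟩ = (1/2)∫∫ e^{-(x²+y²)/2} f(x) g(y) sgn(y-x) dx dy`. -/
noncomputable def skewInner (f g : ℝ → ℝ) : ℝ :=
  (1 / 2) * ∫ x : ℝ, ∫ y : ℝ,
    Real.exp (-(x ^ 2 + y ^ 2) / 2) * f x * g y * Real.sign (y - x)

/-- The even-indexed GinOE skew-orthogonal polynomial `p_{2j}(x) = x^{2j}`. -/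
def pEven (j : ℕ) : ℝ → ℝ := fun x => x ^ (2 * j)

/-- The odd-indexed GinOE skew-orthogonal polynomial
`p_{2j+1}(x) = x^{2j+1} - 2j x^{2j-1}`. -/
def pOdd (j : ℕ) : ℝ → ℝ := fun x => x ^ (2 * j + 1) - (2 * j : ℝ) * x ^ (2 * j - 1)

section OddIntegral

variable {G E : Type*} [AddGroup G] [MeasurableSpace G] [MeasurableNeg G]
  [NormedAddCommGroup E] [NormedSpace ℝ E]

theorem Function.Odd.integral_eq_zero {f : G → E} (hf : f.Odd) (μ : Measure G)
    [μ.IsNegInvariant] : ∫ x, f x ∂μ = 0 := by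
  have h : ∫ x, f x ∂μ = -∫ x, f x ∂μ := by
    simpa only [hf.eq, integral_neg] using (integral_neg_eq_self f μ).symm
  have : IsAddTorsionFree E := .of_isTorsionFree ℝ E
  exact self_eq_neg.mp h

theorem odd_integral_of_apply_neg_neg {H : Type*} [Neg H] {K : H → G → E}
    (hK : ∀ x y, K (-x) (-y) = -K x y) (ν : Measure G) [ν.IsNegInvariant] :
    Function.Odd fun x => ∫ y, K x y ∂ν := fun x => by
  simp only [← integral_neg_eq_self (K (-x)) ν, hK, integral_neg]

end OddIntegral

theorem skewInner_eq_zero_of_neg_neg {f g : ℝ → ℝ} (h : ∀ x y, f (-x) * g (-y) = f x * g y) :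
    skewInner f g = 0 := by
  have hK : ∀ x y : ℝ, exp (-((-x) ^ 2 + (-y) ^ 2) / 2) * f (-x) * g (-y) * sign (-y - -x)
      = -(exp (-(x ^ 2 + y ^ 2) / 2) * f x * g y * sign (y - x)) := fun x y => by
    rw [show -y - -x = -(y - x) by ring, Real.sign_neg, neg_sq, neg_sq]
    linear_combination (-(exp (-(x ^ 2 + y ^ 2) / 2) * sign (y - x))) * h x y
  rw [skewInner, (odd_integral_of_apply_neg_neg hK volume).integral_eq_zero volume, mul_zero]

theorem skewInner_eq_zero_of_even {f g : ℝ → ℝ} (hf : f.Even) (hg : g.Even) :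
    skewInner f g = 0 :=
  skewInner_eq_zero_of_neg_neg fun x y => by rw [hf, hg]

theorem skewInner_eq_zero_of_odd {f g : ℝ → ℝ} (hf : f.Odd) (hg : g.Odd) :
    skewInner f g = 0 :=
  skewInner_eq_zero_of_neg_neg fun x y => by rw [hf, hg, neg_mul_neg]

theorem pEven_even (j : ℕ) : (pEven j).Even := fun x =>
  (even_two_mul j).neg_pow x

theorem pOdd_odd (j : ℕ) : (pOdd j).Odd := fun x => by
  rcases j with _ | j
  -- the exponent `2 * 0 - 1` truncates to `0`, but its coefficient vanishes
  · simp [pOdd]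
  · have h₁ : Odd (2 * (j + 1) + 1) := odd_two_mul_add_one _
    have h₂ : Odd (2 * (j + 1) - 1) := ⟨j, by omega⟩
    simp only [pOdd, h₁.neg_pow, h₂.neg_pow]
    ring

/-- `⟨p_{2j}, p_{2k}⟩ = 0` and `⟨p_{2j+1}, p_{2k+1}⟩ = 0` for all `j, k`. -/
theorem skewInner_same_parity_eq_zero (j k : ℕ) :
    skewInner (pEven j) (pEven k) = 0 ∧ skewInner (pOdd j) (pOdd k) = 0 :=
  ⟨skewInner_eq_zero_of_even (pEven_even j) (pEven_even k),
    skewInner_eq_zero_of_odd (pOdd_odd j) (pOdd_odd k)⟩
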